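/- Let T be the (j-i+1)×(j-i+1) exponential correlation matrix with coefficient ρ, 0 ≤ |ρ| < 1 (entries T_{m,n} = ρ^{n-m} for m < n, (ρ*)^{m-n} for m > n, 1 on the diagonal). Then the largest eigenvalue of T is at least B_lower = (1+|ρ|)/(1-|ρ|) − 2|ρ|(1−|ρ|^{j-i+1}) / ((j-i+1)(1−|ρ|)^2). -/

import Mathlib

/-!
A Hermitian matrix `A` satisfies `re (v* A v) ≤ λ_max ‖v‖²`, so it suffices to exhibit one good
test vector. Write `ρ = |ρ| u` with `|u| = 1`; conjugating `T` by `diag (u^m)` turns it into the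
real Kac–Murdock–Szegő matrix `(|ρ| ^ |m - n|)`, so `v_n = ū^n` gives `v* T v = ∑_{m,n<N} |ρ|^|m-n|`
and `v* v = N`. Summing the geometric rows, `(1 - r)² ∑_{m,n<N} r^|m-n| = N (1 - r²) - 2 r (1 - r^N)`,
and dividing by `N (1 - r)²` gives the bound.
-/

open Matrix Unitary Finset ComplexConjugate
open scoped ComplexOrder

namespace Matrix.IsHermitian

variable {𝕜 n : Type*} [RCLike 𝕜] [Fintype n] [DecidableEq n] {A : Matrix n n 𝕜}

theorem posSemidef_smul_one_sub (hA : A.IsHermitian) {c : ℝ} (hc : ∀ k, hA.eigenvalues k ≤ c) :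
    ((c : 𝕜) • (1 : Matrix n n 𝕜) - A).PosSemidef := by
  have hconj : (c : 𝕜) • (1 : Matrix n n 𝕜) - A = conjStarAlgAut 𝕜 _ hA.eigenvectorUnitary
      (diagonal fun k => ((c - hA.eigenvalues k : ℝ) : 𝕜)) := by
    conv_lhs => rw [hA.spectral_theorem, ← map_one (conjStarAlgAut 𝕜 _ hA.eigenvectorUnitary),
      ← map_smul, ← map_sub]
    congr 1
    ext i j
    by_cases h : i = j <;> simp [h, Algebra.algebraMap_eq_smul_one, sub_smul]
  rw [hconj, conjStarAlgAut_apply, isUnit_coe.posSemidef_star_right_conjugate_iff,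
    posSemidef_diagonal_iff]
  exact fun k => RCLike.ofReal_nonneg.mpr (sub_nonneg.mpr (hc k))

theorem re_star_dotProduct_mulVec_le (hA : A.IsHermitian) {c : ℝ}
    (hc : ∀ k, hA.eigenvalues k ≤ c) (v : n → 𝕜) :
    RCLike.re (star v ⬝ᵥ A *ᵥ v) ≤ c * RCLike.re (star v ⬝ᵥ v) := by
  simpa [sub_mulVec, dotProduct_sub, smul_mulVec, dotProduct_smul, RCLike.real_smul_eq_coe_mul,
    RCLike.re_ofReal_mul] using (hA.posSemidef_smul_one_sub hc).re_dotProduct_nonneg v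

end Matrix.IsHermitian

section KacMurdockSzego

variable {R : Type*} [CommRing R] (r : R)

theorem one_sub_mul_sum_range_pow_dist (N : ℕ) :
    (1 - r) * ∑ m ∈ range N, r ^ Nat.dist m N = r * (1 - r ^ N) := by
  induction N with
  | zero => simp
  | succ N ih =>
    rw [sum_range_succ', Nat.dist_zero_left]
    simp only [Nat.dist_succ_succ]
    linear_combination ih

theorem sq_one_sub_mul_sum_range_sum_range_pow_dist (N : ℕ) :
    (1 - r) ^ 2 * ∑ m ∈ range N, ∑ n ∈ range N, r ^ Nat.dist m n =
      N * (1 - r ^ 2) - 2 * r * (1 - r ^ N) := by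
  induction N with
  | zero => simp
  | succ N ih =>
    simp only [sum_range_succ, sum_add_distrib, Nat.dist_self, Nat.dist_comm N]
    push_cast
    linear_combination ih + 2 * (1 - r) * one_sub_mul_sum_range_pow_dist r N

end KacMurdockSzego

def expCorrMatrix (N : ℕ) (ρ : ℂ) : Matrix (Fin N) (Fin N) ℂ :=
  of fun m n => if (m : ℕ) < n then ρ ^ ((n : ℕ) - m) else if m = n then 1
    else conj ρ ^ ((m : ℕ) - n)

theorem pow_mul_expCorrMatrix_mul_conj_pow {N : ℕ} {u : ℂ} (hu : ‖u‖ = 1) (r : ℝ)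
    (m n : Fin N) :
    u ^ (m : ℕ) * expCorrMatrix N (r * u) m n * conj u ^ (n : ℕ) = r ^ Nat.dist m n := by
  have hunit (k : ℕ) : u ^ k * conj u ^ k = 1 := by
    rw [← mul_pow, Complex.mul_conj, Complex.normSq_eq_norm_sq, hu]; simp
  simp only [expCorrMatrix, of_apply, ← Fin.val_inj]
  rcases lt_trichotomy (m : ℕ) n with h | h | h
  · obtain ⟨d, hd⟩ := Nat.exists_eq_add_of_le h.le
    rw [if_pos h, Nat.dist_eq_sub_of_le h.le, hd, Nat.add_sub_cancel_left]
    linear_combination (r : ℂ) ^ d * hunit (m + d)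
  · simp [h, hunit]
  · obtain ⟨d, hd⟩ := Nat.exists_eq_add_of_le h.le
    rw [if_neg h.not_gt, if_neg h.ne', Nat.dist_eq_sub_of_le_right h.le, hd,
      Nat.add_sub_cancel_left, map_mul, Complex.conj_ofReal]
    linear_combination (r : ℂ) ^ d * hunit (n + d)

theorem star_dotProduct_expCorrMatrix_mulVec {N : ℕ} {u : ℂ} (hu : ‖u‖ = 1) (r : ℝ) :
    star (fun n : Fin N => conj u ^ (n : ℕ)) ⬝ᵥ
        expCorrMatrix N (r * u) *ᵥ (fun n : Fin N => conj u ^ (n : ℕ)) =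
      ((∑ m ∈ range N, ∑ n ∈ range N, r ^ Nat.dist m n : ℝ) : ℂ) := by
  simp only [dotProduct, mulVec, mul_sum, Pi.star_apply, star_pow, Complex.star_def,
    Complex.conj_conj, ← mul_assoc, pow_mul_expCorrMatrix_mul_conj_pow hu]
  push_cast
  rw [Fin.sum_univ_eq_sum_range (fun m => ∑ n : Fin N, (r : ℂ) ^ Nat.dist m n)]
  exact sum_congr rfl fun m _ => Fin.sum_univ_eq_sum_range (fun n => (r : ℂ) ^ Nat.dist m n) N

theorem exp_corr_max_eigenvalue_lower_bound_general (i j : ℕ)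
    (ρ : ℂ) (hρ : ‖ρ‖ < 1)
    (T : Matrix (Fin (j - i + 1)) (Fin (j - i + 1)) ℂ)
    (hT : T = Matrix.of fun m n : Fin (j - i + 1) =>
      if (m : ℕ) < (n : ℕ) then ρ ^ ((n : ℕ) - (m : ℕ))
      else if m = n then 1
      else (starRingEnd ℂ ρ) ^ ((m : ℕ) - (n : ℕ)))
    (hHerm : T.IsHermitian) :
    (1 + ‖ρ‖) / (1 - ‖ρ‖) -
        2 * ‖ρ‖ * (1 - (‖ρ‖) ^ (j - i + 1)) /
          (((j - i + 1 : ℕ) : ℝ) * (1 - ‖ρ‖) ^ 2) ≤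
      ⨆ k, hHerm.eigenvalues k := by
  set u := Complex.exp (ρ.arg * Complex.I)
  have hu : ‖u‖ = 1 := Complex.norm_exp_ofReal_mul_I _
  have hTu : T = expCorrMatrix (j - i + 1) (‖ρ‖ * u) := by
    rw [Complex.norm_mul_exp_arg_mul_I, hT]; rfl
  set v : Fin (j - i + 1) → ℂ := fun n => conj u ^ (n : ℕ)
  have hvv : star v ⬝ᵥ v = (j - i + 1 : ℕ) := by
    simp [v, dotProduct, ← mul_pow, Complex.mul_conj, Complex.normSq_eq_norm_sq, hu]
  set S : ℝ := ∑ m ∈ range (j - i + 1), ∑ n ∈ range (j - i + 1), ‖ρ‖ ^ Nat.dist m n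
  have hquad : star v ⬝ᵥ T *ᵥ v = S := by
    rw [hTu]; exact star_dotProduct_expCorrMatrix_mulVec hu ‖ρ‖
  have hray := hHerm.re_star_dotProduct_mulVec_le
    (fun k => le_ciSup (Set.finite_range hHerm.eigenvalues).bddAbove k) v
  rw [hquad, hvv] at hray
  simp only [RCLike.re_to_complex, Complex.ofReal_re, Complex.natCast_re] at hray
  have hr : 0 < 1 - ‖ρ‖ := by linarith
  calc _ = S / (j - i + 1 : ℕ) := by
        field_simp
        linear_combination -sq_one_sub_mul_sum_range_sum_range_pow_dist ‖ρ‖ (j - i + 1)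
    _ ≤ ⨆ k, hHerm.eigenvalues k := (div_le_iff₀ (by positivity)).mpr hray

/-- Lower bound on the largest eigenvalue of the (j-i+1)×(j-i+1) exponential
correlation matrix (Proposition 1, lower bound). -/
theorem exp_corr_max_eigenvalue_lower_bound (i j : ℕ) (hij : i ≤ j)
    (ρ : ℂ) (hρ : ‖ρ‖ < 1)
    (T : Matrix (Fin (j - i + 1)) (Fin (j - i + 1)) ℂ)
    (hT : T = Matrix.of fun m n : Fin (j - i + 1) =>
      if (m : ℕ) < (n : ℕ) then ρ ^ ((n : ℕ) - (m : ℕ))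
      else if m = n then 1
      else (starRingEnd ℂ ρ) ^ ((m : ℕ) - (n : ℕ)))
    (hHerm : T.IsHermitian) :
    (1 + ‖ρ‖) / (1 - ‖ρ‖) -
        2 * ‖ρ‖ * (1 - (‖ρ‖) ^ (j - i + 1)) /
          (((j - i + 1 : ℕ) : ℝ) * (1 - ‖ρ‖) ^ 2) ≤
      ⨆ k, hHerm.eigenvalues k :=
  exp_corr_max_eigenvalue_lower_bound_general i j ρ hρ T hT hHerm
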